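/- Let G be an undirected graph and suppose all paths in the available path set P are shortest paths (i.e., each path in P is a shortest path between its endpoints). If Q is a nonempty set of oriented edges that is a path trace (a subset of some path in P containing an edge leaving the source and an edge entering the destination) from x to y and also a path trace from z to w, then {x,y} = {z,w}. In other words, every nonempty path trace arising from shortest paths has a uniquely determined source-destination pair. -/
import Mathlib


/-- `Q` is a path trace from `x` to `y` with respect to the set `Ps` of available
paths (walks with designated endpoints): `x` has an edge of `Q` leaving it, `y`
has an edge of `Q` entering it, and some path of `Ps` from `x` to `y` contains
all oriented edges of `Q`. -/
def IsPathTrace {V : Type} [Fintype V] [DecidableEq V] (G : SimpleGraph V)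
    (Ps : Set (Σ x y : V, G.Walk x y)) (Q : Finset (V × V)) (x y : V) : Prop :=
  (∃ e ∈ Q, e.1 = x) ∧ (∃ e ∈ Q, e.2 = y) ∧
  ∃ p ∈ Ps, p.1 = x ∧ p.2.1 = y ∧
    ∀ e ∈ Q, e ∈ p.2.2.darts.map SimpleGraph.Dart.toProd

/-- Any two vertices on a walk are at graph distance at most the difference
of their indices. -/
lemma aux_dist_getVert_le {V : Type} [DecidableEq V] {G : SimpleGraph V} :
    ∀ {s t : V} (r : G.Walk s t) (i j : ℕ), i ≤ j →
      G.dist (r.getVert i) (r.getVert j) ≤ j - i := by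
  intro s t r
  induction r with
  | nil => intro i j _; simp [SimpleGraph.Walk.getVert, SimpleGraph.dist_self]
  | @cons u u' t h r ih =>
    intro i j hij
    match i, j with
    | 0, 0 => simp
    | 0, (j + 1) =>
      rw [SimpleGraph.Walk.getVert_zero, SimpleGraph.Walk.getVert_cons_succ]
      have hr : G.Reachable u' (r.getVert j) := by
        have hmem : r.getVert j ∈ r.support := by
          rcases le_or_gt j r.length with hj | hj
          · exact SimpleGraph.Walk.mem_support_iff_exists_getVert.mpr ⟨j, rfl, hj⟩
          · rw [r.getVert_of_length_le hj.le]; exact r.end_mem_support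
        exact ⟨r.takeUntil _ hmem⟩
      rcases hr.exists_walk_length_eq_dist with ⟨q, hq⟩
      have h1 := G.dist_le (q.cons h)
      rw [SimpleGraph.Walk.length_cons, hq] at h1
      have h2 := ih 0 j (Nat.zero_le j)
      rw [SimpleGraph.Walk.getVert_zero] at h2
      omega
    | (i + 1), (j + 1) =>
      rw [SimpleGraph.Walk.getVert_cons_succ, SimpleGraph.Walk.getVert_cons_succ]
      have := ih i j (by omega)
      omega

/-- On a shortest walk, the vertex at index `i` is at distance exactly `i`
from the start and `length - i` from the end. -/
lemma aux_getVert_dist {V : Type} [DecidableEq V] {G : SimpleGraph V} {s t : V} (r : G.Walk s t)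
    (hr : r.length = G.dist s t) (i : ℕ) (hi : i ≤ r.length) :
    G.dist s (r.getVert i) = i ∧ G.dist (r.getVert i) t = r.length - i := by
  set u := r.getVert i with hu
  have h1 : G.dist s u ≤ i := by
    have := aux_dist_getVert_le r 0 i (Nat.zero_le i)
    simpa using this
  have h2 : G.dist u t ≤ r.length - i := by
    have := aux_dist_getVert_le r i r.length hi
    simpa [SimpleGraph.Walk.getVert_length] using this
  have hmem : u ∈ r.support := SimpleGraph.Walk.mem_support_iff_exists_getVert.mpr ⟨i, rfl, hi⟩
  have hru : G.Reachable s u := ⟨r.takeUntil _ hmem⟩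
  have hrt : G.Reachable u t := ⟨r.dropUntil _ hmem⟩
  rcases hru.exists_walk_length_eq_dist with ⟨q1, hq1⟩
  rcases hrt.exists_walk_length_eq_dist with ⟨q2, hq2⟩
  have h3 : G.dist s t ≤ G.dist s u + G.dist u t := by
    have := G.dist_le (q1.append q2)
    simpa [SimpleGraph.Walk.length_append, hq1, hq2] using this
  omega

/-- Every dart of a walk occurs at some index. -/
lemma aux_dart_index {V : Type} {G : SimpleGraph V} :
    ∀ {s t : V} (r : G.Walk s t) (d : G.Dart), d ∈ r.darts →
      ∃ i < r.length, r.getVert i = d.toProd.1 ∧ r.getVert (i + 1) = d.toProd.2 := by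
  intro s t r
  induction r with
  | nil => intro d hd; simp at hd
  | @cons u u' t h r ih =>
    intro d hd
    rw [SimpleGraph.Walk.darts_cons, List.mem_cons] at hd
    rcases hd with hd | hd
    · refine ⟨0, by simp, ?_, ?_⟩ <;> subst hd <;> simp [SimpleGraph.Walk.getVert_cons_succ]
    · rcases ih d hd with ⟨i, hi, h1, h2⟩
      exact ⟨i + 1, by simpa using Nat.succ_lt_succ hi,
        by simpa [SimpleGraph.Walk.getVert_cons_succ] using h1,
        by simpa [SimpleGraph.Walk.getVert_cons_succ] using h2⟩

/-- If all available paths are shortest paths, then every nonempty path trace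
has a uniquely determined pair of endpoints: if `Q` is a path trace from `x` to
`y` and also from `z` to `w`, then `{x,y} = {z,w}`. -/
theorem path_trace_endpoints_unique
    {V : Type} [Fintype V] [DecidableEq V] (G : SimpleGraph V)
    (Ps : Set (Σ x y : V, G.Walk x y))
    (hshort : ∀ p ∈ Ps, p.2.2.length = G.dist p.1 p.2.1)
    (Q : Finset (V × V)) (hQ : Q.Nonempty)
    (x y z w : V)
    (hxy : IsPathTrace G Ps Q x y) (hzw : IsPathTrace G Ps Q z w) :
    ({x, y} : Finset V) = {z, w} := by
  obtain ⟨⟨e1, he1Q, he1x⟩, ⟨e2, he2Q, he2y⟩, ⟨px, py, p⟩, hpPs, hp1, hp2, hpQ⟩ := hxy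
  obtain ⟨⟨e3, he3Q, he3z⟩, ⟨e4, he4Q, he4w⟩, ⟨qz, qw, q⟩, hqPs, hq1, hq2, hqQ⟩ := hzw
  dsimp only at hp1 hp2 hq1 hq2 hpQ hqQ
  subst hp1; subst hp2; subst hq1; subst hq2
  have hpshort : p.length = G.dist px py := hshort _ hpPs
  have hqshort : q.length = G.dist qz qw := hshort _ hqPs
  -- get darts on the *other* walk
  have getd : ∀ (e : V × V), e ∈ Q → ∀ {s t : V} (r : G.Walk s t),
      (∀ e' ∈ Q, e' ∈ r.darts.map SimpleGraph.Dart.toProd) →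
      ∃ i < r.length, r.getVert i = e.1 ∧ r.getVert (i + 1) = e.2 := by
    intro e he s t r hr
    rcases List.mem_map.mp (hr e he) with ⟨d, hd, hde⟩
    rcases aux_dart_index r d hd with ⟨i, hi, h1, h2⟩
    exact ⟨i, hi, by rw [h1, hde], by rw [h2, hde]⟩
  -- e1 = (x, a) on q
  obtain ⟨i, hi, hix, _⟩ := getd e1 he1Q q hqQ
  rw [he1x] at hix
  -- e3 = (z, c) on p
  obtain ⟨k, hk, hkz, _⟩ := getd e3 he3Q p hpQ
  rw [he3z] at hkz
  -- e2 = (b, y) on q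
  obtain ⟨j, hj, _, hjy⟩ := getd e2 he2Q q hqQ
  rw [he2y] at hjy
  -- e4 = (d, w) on p
  obtain ⟨l, hl, _, hlw⟩ := getd e4 he4Q p hpQ
  rw [he4w] at hlw
  -- distances
  have hA1 := aux_getVert_dist q hqshort i hi.le
  rw [hix] at hA1
  have hA2 := aux_getVert_dist p hpshort k hk.le
  rw [hkz] at hA2
  have hA3 := aux_getVert_dist q hqshort (j + 1) hj
  rw [hjy] at hA3
  have hA4 := aux_getVert_dist p hpshort (l + 1) hl
  rw [hlw] at hA4
  have hcomm1 : G.dist px qz = G.dist qz px := G.dist_comm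
  have hcomm2 : G.dist py qw = G.dist qw py := G.dist_comm
  have hik : i = k := by omega
  -- comparing positions of x (index i) and y (index j+1) on q
  have hk0 : k = 0 ∧ j + 1 = q.length := by
    rcases le_or_gt i (j + 1) with hij | hij
    · have := aux_dist_getVert_le q i (j + 1) hij
      rw [hix, hjy] at this
      omega
    · have := aux_dist_getVert_le q (j + 1) i hij.le
      rw [hix, hjy] at this
      rw [G.dist_comm] at this
      omega
  have hxz : px = qz := by
    rw [← hkz, hk0.1, SimpleGraph.Walk.getVert_zero]
  have hyw : py = qw := by
    rw [← hjy, hk0.2, SimpleGraph.Walk.getVert_length]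
  rw [hxz, hyw]
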